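/- arXiv:2311.12780 — 3 statements merged into one kernel-verified Lean document; each statement's English description precedes it below -/
import Mathlib

section
/- Exponential tail for the length of the conditioned walk: For 0 < λ < 1/2 there exist constants c, C > 0 such that for every N ≥ 1 and every t ≥ 0, P_λ^{N²}[|Γ| ≥ tN] ≤ C·e^{−cN(t − 2√2)}, where P_λ^{N²} = P_λ[· | A(Γ) ≥ N²] is the area-conditioned measure. -/
/-!
Encode a path of length `n` by its word `ξ : Fin n → Bool` of steps (`true` = right). This is a
bijection, and the area of the path is the number of pairs `i < j` with `ξ i` right and `ξ j` down.
Hence `P_λ[|Γ| = n] = (1 - 2λ)(2λ)^n`, and the numerator is at most `P_λ[|Γ| ≥ ⌈tN⌉] = (2λ)^⌈tN⌉`.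

For the denominator, let `T` and `F` count the right and down steps. Complementing a word swaps
`T` and `F` and turns the area `A` into `TF - A`, so at least half of all words have `2A ≥ TF`.
The second moment of `T - F` over all words is `n 2^n`, so by Chebyshev at most a quarter of them
have `(T - F)^2 > 4n`. On the remaining quarter `8A ≥ 4TF = n^2 - (T - F)^2 ≥ n^2 - 4n ≥ 8N^2` as
soon as `n ≥ 2√2 N + 3`, so the denominator is at least `(1 - 2λ)(2λ)^n / 4` for such an `n`.
-/

def IsStep (p q : ℤ × ℤ) : Prop := q = (p.1 + 1, p.2) ∨ q = (p.1, p.2 - 1)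

def IsPathFun (n : ℕ) (γ : ℕ → ℤ × ℤ) : Prop :=
  (∀ k, k < n → IsStep (γ k) (γ (k + 1))) ∧ ∀ k, n ≤ k → γ k = γ n

def IsLamPath (n : ℕ) (γ : ℕ → ℤ × ℤ) : Prop :=
  IsPathFun n γ ∧ (γ 0).1 = 0 ∧ (γ n).2 = 0 ∧ ∀ k, 0 ≤ (γ k).1 ∧ 0 ≤ (γ k).2

def IsPathBtw (n : ℕ) (x y : ℤ × ℤ) (γ : ℕ → ℤ × ℤ) : Prop :=
  IsPathFun n γ ∧ γ 0 = x ∧ γ n = y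

def pathArea (n : ℕ) (γ : ℕ → ℤ × ℤ) : ℤ :=
  ∑ k ∈ Finset.range n, if (γ (k + 1)).1 = (γ k).1 + 1 then (γ k).2 else 0

abbrev DRPath := Σ n : ℕ, {γ : ℕ → ℤ × ℤ // IsLamPath n γ}

noncomputable def pWeight (l : ℝ) (p : DRPath) : ℝ := (1 - 2 * l) * l ^ p.1

def pArea (p : DRPath) : ℤ := pathArea p.1 p.2.1

open Finset

section Words

variable {n : ℕ}

def wordArea (ξ : Fin n → Bool) : ℕ := #{p : Fin n × Fin n | p.1 < p.2 ∧ ξ p.1 ∧ ¬ξ p.2}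

def wordSpin (ξ : Fin n → Bool) : ℤ := ∑ i, if ξ i then 1 else -1

theorem wordArea_add_wordArea_not (ξ : Fin n → Bool) :
    wordArea ξ + wordArea (fun i => !ξ i) = #{i | ξ i} * #{i | ¬ξ i} := by
  simp only [wordArea, card_filter, Fintype.sum_prod_type, sum_mul_sum]
  conv_lhs => arg 2; rw [sum_comm]
  rw [← sum_add_distrib]
  refine sum_congr rfl fun i _ => ?_
  rw [← sum_add_distrib]
  refine sum_congr rfl fun j _ => ?_
  rcases lt_trichotomy i j with h | h | h
  · cases ξ i <;> cases ξ j <;> simp [h, h.le]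
  · subst h; cases ξ i <;> simp
  · cases ξ i <;> cases ξ j <;> simp [h, h.le]

theorem wordSpin_eq_card_sub_card (ξ : Fin n → Bool) :
    wordSpin ξ = #{i | ξ i} - #{i | ¬ξ i} := by
  simp only [wordSpin, card_filter, Nat.cast_sum, Nat.cast_ite, Nat.cast_one, Nat.cast_zero,
    ← sum_sub_distrib]
  exact sum_congr rfl fun i _ => by cases ξ i <;> rfl

theorem sum_wordSpin_sq : ∀ n : ℕ, ∑ ξ : Fin n → Bool, wordSpin ξ ^ 2 = n * 2 ^ n
  | 0 => by simp [wordSpin]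
  | n + 1 => by
    have hcons (b : Bool) (ξ : Fin n → Bool) :
        wordSpin (Fin.consEquiv (fun _ => Bool) (b, ξ)) = (if b then 1 else -1) + wordSpin ξ := by
      simp [wordSpin, Fin.sum_univ_succ]
    have hpair (s : ℤ) : (1 + s) ^ 2 + (-1 + s) ^ 2 = 2 * s ^ 2 + 2 := by ring
    rw [← (Fin.consEquiv fun _ => Bool).sum_comp]
    simp only [Fintype.sum_prod_type, Fintype.sum_bool, hcons, ↓reduceIte, Bool.false_eq_true]
    rw [← sum_add_distrib]
    simp only [hpair, sum_add_distrib, ← mul_sum, sum_wordSpin_sq n, sum_const, card_univ,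
      Fintype.card_fun, Fintype.card_bool, Fintype.card_fin, nsmul_eq_mul]
    push_cast
    ring

theorem card_wordSpin_sq_gt_le (n : ℕ) :
    4 * #{ξ : Fin n → Bool | 4 * n < wordSpin ξ ^ 2} ≤ 2 ^ n := by
  set B := ({ξ : Fin n → Bool | 4 * n < wordSpin ξ ^ 2} : Finset _)
  have hmarkov : (#B : ℤ) * (4 * n + 1) ≤ n * 2 ^ n :=
    calc (#B : ℤ) * (4 * n + 1) = #B • (4 * n + 1 : ℤ) := by rw [nsmul_eq_mul]
      _ ≤ ∑ ξ ∈ B, wordSpin ξ ^ 2 := card_nsmul_le_sum _ _ _ fun ξ hξ => (mem_filter.1 hξ).2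
      _ ≤ ∑ ξ, wordSpin ξ ^ 2 :=
        sum_le_sum_of_subset_of_nonneg (subset_univ _) fun _ _ _ => sq_nonneg _
      _ = n * 2 ^ n := sum_wordSpin_sq n
  have : (4 * #B : ℤ) ≤ 2 ^ n := by nlinarith [pow_pos (two_pos : (0 : ℤ) < 2) n]
  exact_mod_cast this

theorem Fintype.card_le_two_mul_card_filter {α : Type*} [Fintype α] (p : α → Prop)
    [DecidablePred p] {f : α → α} (hf : Function.Injective f) (hp : ∀ a, ¬p a → p (f a)) :
    Fintype.card α ≤ 2 * #{a | p a} := by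
  have hle : #{a | ¬p a} ≤ #{a | p a} :=
    card_le_card_of_injOn f (fun a ha => by simp_all) hf.injOn
  have hsplit : #{a | p a} + #{a | ¬p a} = Fintype.card α :=
    card_filter_add_card_filter_not (s := univ) p
  omega

theorem two_pow_le_two_mul_card_mul_le_two_mul_wordArea (n : ℕ) :
    2 ^ n ≤ 2 * #{ξ : Fin n → Bool | #{i | ξ i} * #{i | ¬ξ i} ≤ 2 * wordArea ξ} := by
  have h := Fintype.card_le_two_mul_card_filter
    (fun ξ : Fin n → Bool => #{i | ξ i} * #{i | ¬ξ i} ≤ 2 * wordArea ξ)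
    (f := fun ξ i => !ξ i) (fun ξ ξ' h => funext fun i => by simpa using congrFun h i)
    (fun ξ hξ => by
      have := wordArea_add_wordArea_not ξ
      simp only [Bool.not_eq_true', Bool.not_eq_true, Bool.not_eq_false] at hξ this ⊢
      rw [mul_comm]
      omega)
  simpa [Fintype.card_fun] using h

theorem sq_le_wordArea {N : ℕ} (hn : 8 * N ^ 2 + 4 * n ≤ n ^ 2) {ξ : Fin n → Bool}
    (harea : #{i | ξ i} * #{i | ¬ξ i} ≤ 2 * wordArea ξ) (hspin : wordSpin ξ ^ 2 ≤ 4 * n) :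
    N ^ 2 ≤ wordArea ξ := by
  have hcount : (#{i | ξ i} + #{i | ¬ξ i} : ℤ) = n := by
    exact_mod_cast (card_filter_add_card_filter_not (s := univ) _).trans (card_fin n)
  rw [wordSpin_eq_card_sub_card] at hspin
  have : (2 * N ^ 2 : ℤ) ≤ #{i | ξ i} * #{i | ¬ξ i} := by nlinarith
  zify at harea ⊢
  linarith

theorem two_pow_le_four_mul_card_sq_le_wordArea {N : ℕ} (hn : 8 * N ^ 2 + 4 * n ≤ n ^ 2) :
    2 ^ n ≤ 4 * #{ξ : Fin n → Bool | N ^ 2 ≤ wordArea ξ} := by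
  have hsub : ({ξ : Fin n → Bool | #{i | ξ i} * #{i | ¬ξ i} ≤ 2 * wordArea ξ} : Finset _) ⊆
      ({ξ | N ^ 2 ≤ wordArea ξ} : Finset _) ∪ ({ξ | 4 * n < wordSpin ξ ^ 2} : Finset _) := by
    intro ξ hξ
    rw [mem_filter] at hξ
    rw [mem_union, mem_filter, mem_filter]
    by_cases hspin : 4 * n < wordSpin ξ ^ 2
    · exact Or.inr ⟨mem_univ _, hspin⟩
    · exact Or.inl ⟨mem_univ _, sq_le_wordArea hn hξ.2 (not_lt.1 hspin)⟩
  have := (card_le_card hsub).trans (card_union_le _ _)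
  have := two_pow_le_two_mul_card_mul_le_two_mul_wordArea n
  have := card_wordSpin_sq_gt_le n
  omega

end Words

section Paths

variable {n : ℕ}

theorem card_filter_val_lt_succ (q : Fin n → Prop) [DecidablePred q] {k : ℕ} (hk : k < n) :
    #{i : Fin n | (i : ℕ) < k + 1 ∧ q i} =
      #{i : Fin n | (i : ℕ) < k ∧ q i} + if q ⟨k, hk⟩ then 1 else 0 := by
  simp only [card_filter]
  rw [← Fintype.sum_ite_eq' (⟨k, hk⟩ : Fin n) (fun i => if q i then 1 else 0), ← sum_add_distrib]
  refine sum_congr rfl fun i _ => ?_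
  simp only [Fin.ext_iff]
  by_cases hq : q i
  · simp only [hq, and_true]
    split_ifs <;> omega
  · simp [hq]

theorem card_filter_le_val (q : Fin n → Prop) [DecidablePred q] {k : ℕ} (hk : k < n) :
    #{i : Fin n | k ≤ (i : ℕ) ∧ q i} =
      #{i : Fin n | k + 1 ≤ (i : ℕ) ∧ q i} + if q ⟨k, hk⟩ then 1 else 0 := by
  simp only [card_filter]
  rw [← Fintype.sum_ite_eq' (⟨k, hk⟩ : Fin n) (fun i => if q i then 1 else 0), ← sum_add_distrib]
  refine sum_congr rfl fun i _ => ?_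
  simp only [Fin.ext_iff]
  by_cases hq : q i
  · simp only [hq, and_true]
    split_ifs <;> omega
  · simp [hq]

def wordPath (ξ : Fin n → Bool) (k : ℕ) : ℤ × ℤ :=
  (#{i : Fin n | i < k ∧ ξ i}, #{i : Fin n | k ≤ i ∧ ¬ξ i})

def stepWord (n : ℕ) (γ : ℕ → ℤ × ℤ) : Fin n → Bool := fun i => (γ (i + 1)).1 = (γ i).1 + 1

theorem wordPath_succ (ξ : Fin n → Bool) {k : ℕ} (hk : k < n) :
    wordPath ξ (k + 1) = wordPath ξ k + if ξ ⟨k, hk⟩ then (1, 0) else (0, -1) := by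
  rw [wordPath, wordPath, card_filter_val_lt_succ _ hk, card_filter_le_val _ hk]
  cases ξ ⟨k, hk⟩ <;> simp

theorem wordPath_of_le (ξ : Fin n → Bool) {k : ℕ} (hk : n ≤ k) :
    wordPath ξ k = wordPath ξ n := by
  have hlt (i : Fin n) : (i : ℕ) < k := i.isLt.trans_le hk
  have hk_not_le (i : Fin n) : ¬k ≤ (i : ℕ) := not_le.2 (hlt i)
  have hn_not_le (i : Fin n) : ¬n ≤ (i : ℕ) := not_le.2 i.isLt
  simp [wordPath, hlt, hk_not_le, hn_not_le]

theorem isLamPath_wordPath (ξ : Fin n → Bool) : IsLamPath n (wordPath ξ) := by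
  refine ⟨⟨fun k hk => ?_, fun k hk => wordPath_of_le ξ hk⟩, by simp [wordPath], by simp [wordPath],
    fun k => ⟨by simp [wordPath], by simp [wordPath]⟩⟩
  rw [IsStep, wordPath_succ ξ hk]
  cases ξ ⟨k, hk⟩ <;> simp [Prod.ext_iff, sub_eq_add_neg]

theorem stepWord_wordPath (ξ : Fin n → Bool) : stepWord n (wordPath ξ) = ξ :=
  funext fun i => by cases hi : ξ i <;> simp [stepWord, wordPath_succ ξ i.isLt, hi]

theorem IsStep.sub_eq {p q : ℤ × ℤ} (h : IsStep p q) :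
    q - p = if q.1 = p.1 + 1 then (1, 0) else (0, -1) := by
  rcases h with rfl | rfl <;> simp [Prod.ext_iff]

theorem IsLamPath.eq_of_stepWord_eq {γ γ' : ℕ → ℤ × ℤ} (h : IsLamPath n γ) (h' : IsLamPath n γ')
    (hs : stepWord n γ = stepWord n γ') : γ = γ' := by
  have hinc (k : ℕ) (hk : k < n) : γ (k + 1) - γ k = γ' (k + 1) - γ' k := by
    have hsk := congrFun hs ⟨k, hk⟩
    simp only [stepWord, decide_eq_decide] at hsk
    rw [(h.1.1 k hk).sub_eq, (h'.1.1 k hk).sub_eq, if_congr hsk rfl rfl]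
  -- `γ - γ'` is constant up to time `n`; its first coordinate vanishes at the start, its second
  -- at the end.
  have hconst (k : ℕ) (hk : k ≤ n) : γ k - γ' k = γ 0 - γ' 0 := by
    induction k with
    | zero => rfl
    | succ k ih => rw [← ih (Nat.le_of_succ_le hk), ← sub_eq_sub_iff_sub_eq_sub]; exact hinc k hk
  have hstart : γ 0 - γ' 0 = 0 := by
    have hend := congrArg Prod.snd (hconst n le_rfl)
    simp only [Prod.snd_sub, h.2.2.1, h'.2.2.1, sub_zero] at hend
    ext <;> simp [h.2.1, h'.2.1, ← hend]
  have hmin (k : ℕ) : γ (min k n) = γ' (min k n) :=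
    sub_eq_zero.1 ((hconst _ (min_le_right _ _)).trans hstart)
  funext k
  rcases le_total k n with hkn | hnk
  · simpa [min_eq_left hkn] using hmin k
  · rw [h.1.2 k hnk, h'.1.2 k hnk]
    simpa [min_eq_right hnk] using hmin k

def lamPathEquivWord (n : ℕ) : {γ : ℕ → ℤ × ℤ // IsLamPath n γ} ≃ (Fin n → Bool) where
  toFun γ := stepWord n γ
  invFun ξ := ⟨wordPath ξ, isLamPath_wordPath ξ⟩
  left_inv γ := Subtype.ext ((isLamPath_wordPath _).eq_of_stepWord_eq γ.2 (stepWord_wordPath _))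
  right_inv := stepWord_wordPath

noncomputable instance (n : ℕ) : Fintype {γ : ℕ → ℤ × ℤ // IsLamPath n γ} :=
  Fintype.ofEquiv _ (lamPathEquivWord n).symm

theorem card_lamPath (n : ℕ) : Fintype.card {γ : ℕ → ℤ × ℤ // IsLamPath n γ} = 2 ^ n := by
  simp [Fintype.card_congr (lamPathEquivWord n)]

theorem pathArea_wordPath (ξ : Fin n → Bool) : pathArea n (wordPath ξ) = wordArea ξ := by
  rw [pathArea, ← Fin.sum_univ_eq_sum_range
    (fun k => if (wordPath ξ (k + 1)).1 = (wordPath ξ k).1 + 1 then (wordPath ξ k).2 else 0),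
    wordArea, card_filter, Fintype.sum_prod_type, Nat.cast_sum]
  refine sum_congr rfl fun i _ => ?_
  rw [wordPath_succ ξ i.isLt, ← card_filter]
  cases hi : ξ i
  · simp [hi]
  · simp only [hi, ↓reduceIte, Prod.fst_add, wordPath, Nat.cast_inj, true_and]
    refine congrArg card (filter_congr fun j _ =>
      ⟨fun ⟨hij, hj⟩ => ⟨?_, hj⟩, fun ⟨hij, hj⟩ => ⟨hij.le, hj⟩⟩)
    exact lt_of_le_of_ne hij fun h => hj (h ▸ hi)

end Paths

section Weights

theorem hasSum_comp_length {f : ℕ → ℝ} (hf : ∀ k, 0 ≤ f k) {a : ℝ}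
    (hs : HasSum (fun k => 2 ^ k * f k) a) : HasSum (fun p : DRPath => f p.1) a := by
  have hlayer (k : ℕ) : HasSum (fun _ : {γ // IsLamPath k γ} => f k) (2 ^ k * f k) := by
    simpa [card_lamPath] using hasSum_fintype (fun _ : {γ // IsLamPath k γ} => f k)
  refine hs.sigma_of_hasSum hlayer ((summable_sigma_of_nonneg fun p => hf p.1).2
    ⟨fun k => (hlayer k).summable, ?_⟩)
  simpa only [(hlayer _).tsum_eq] using hs.summable

variable {l : ℝ}

theorem pWeight_nonneg (h1 : 0 ≤ l) (h2 : l ≤ 1 / 2) (p : DRPath) : 0 ≤ pWeight l p :=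
  mul_nonneg (by linarith) (pow_nonneg h1 _)

theorem hasSum_pWeight_length_ge (h1 : 0 ≤ l) (h2 : l < 1 / 2) (m : ℕ) :
    HasSum (fun p : DRPath => if m ≤ p.1 then pWeight l p else 0) ((2 * l) ^ m) := by
  refine hasSum_comp_length (f := fun k => if m ≤ k then (1 - 2 * l) * l ^ k else 0)
    (fun k => by split_ifs; exacts [mul_nonneg (by linarith) (pow_nonneg h1 _), le_rfl]) ?_
  have hgeom := (hasSum_geometric_of_lt_one (by linarith : 0 ≤ 2 * l) (by linarith)).mul_left
    ((2 * l) ^ m * (1 - 2 * l))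
  rw [mul_inv_cancel_right₀ (by linarith : 1 - 2 * l ≠ 0)] at hgeom
  rw [← hasSum_nat_add_iff' m,
    sum_eq_zero fun i hi => by simp [not_le.2 (mem_range.1 hi)], sub_zero]
  refine hgeom.congr_fun fun k => ?_
  rw [if_pos (Nat.le_add_left m k), pow_add, pow_add, mul_pow, mul_pow]
  ring

theorem hasSum_pWeight (h1 : 0 ≤ l) (h2 : l < 1 / 2) : HasSum (pWeight l) 1 := by
  simpa using hasSum_pWeight_length_ge h1 h2 0

theorem tsum_pWeight_le_of_length_ge (h1 : 0 ≤ l) (h2 : l < 1 / 2) {m : ℕ} (P : DRPath → Prop)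
    (hP : ∀ p, P p → m ≤ p.1) : ∑' p : {p // P p}, pWeight l p ≤ (2 * l) ^ m := by
  rw [← (hasSum_pWeight_length_ge h1 h2 m).tsum_eq]
  refine Summable.tsum_le_tsum_of_inj Subtype.val Subtype.val_injective
    (fun p _ => by split_ifs <;> simp [pWeight_nonneg h1 h2.le p])
    (fun p => by rw [if_pos (hP p p.2)])
    ((hasSum_pWeight h1 h2).summable.subtype _) (hasSum_pWeight_length_ge h1 h2 m).summable

theorem le_tsum_pWeight_area_ge (h1 : 0 ≤ l) (h2 : l < 1 / 2) {N n : ℕ}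
    (hn : 8 * N ^ 2 + 4 * n ≤ n ^ 2) :
    (1 - 2 * l) / 4 * (2 * l) ^ n ≤
      ∑' p : {p : DRPath // (N : ℤ) ^ 2 ≤ pArea p}, pWeight l p := by
  let e : {ξ : Fin n → Bool // N ^ 2 ≤ wordArea ξ} → {p : DRPath // (N : ℤ) ^ 2 ≤ pArea p} :=
    fun ξ => ⟨⟨n, (lamPathEquivWord n).symm ξ⟩, by
      simpa [pArea, lamPathEquivWord, pathArea_wordPath] using (Nat.cast_le (α := ℤ)).2 ξ.2⟩
  have he : Function.Injective e := fun ξ ξ' h =>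
    Subtype.ext ((lamPathEquivWord n).symm.injective
      (sigma_mk_injective (i := n) (congrArg Subtype.val h)))
  have hle := tsum_comp_le_tsum_of_inj ((hasSum_pWeight h1 h2).summable.subtype _)
    (fun p => pWeight_nonneg h1 h2.le p.1) he
  have hcard : (2 : ℝ) ^ n ≤ 4 * #{ξ : Fin n → Bool | N ^ 2 ≤ wordArea ξ} := by
    exact_mod_cast two_pow_le_four_mul_card_sq_le_wordArea hn
  refine le_trans ?_ hle
  simp only [Function.comp_def, e, pWeight, tsum_fintype, sum_const, card_univ,
    Fintype.card_subtype, nsmul_eq_mul]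
  calc (1 - 2 * l) / 4 * (2 * l) ^ n = 2 ^ n / 4 * ((1 - 2 * l) * l ^ n) := by ring
    _ ≤ _ := by gcongr; exacts [mul_nonneg (by linarith) (pow_nonneg h1 _), by linarith]

end Weights

/-- Exponential tail for the length of the area-conditioned walk: there are `c, C > 0`
such that for every `N ≥ 1` and `t ≥ 0`,
`P_λ^{N²}[|Γ| ≥ tN] ≤ C exp(−cN(t − 2√2))`. -/
theorem stmt6 (l : ℝ) (h1 : 0 < l) (h2 : l < 1 / 2) :
    ∃ c C : ℝ, 0 < c ∧ 0 < C ∧ ∀ N : ℕ, 1 ≤ N → ∀ t : ℝ, 0 ≤ t →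
      (∑' p : {p : DRPath // (N : ℤ) ^ 2 ≤ pArea p ∧ t * (N : ℝ) ≤ (p.1 : ℝ)},
          pWeight l p.1) /
        (∑' p : {p : DRPath // (N : ℤ) ^ 2 ≤ pArea p}, pWeight l p.1)
      ≤ C * Real.exp (-c * (N : ℝ) * (t - 2 * Real.sqrt 2)) := by
  set c := -Real.log (2 * l)
  have hc : 0 < c := neg_pos.2 (Real.log_neg (by linarith) (by linarith))
  have hpow (k : ℕ) : (2 * l) ^ k = Real.exp (-(c * k)) := by
    rw [show -(c * k) = k * Real.log (2 * l) by ring, Real.exp_nat_mul, Real.exp_log (by linarith)]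
  have h12 : 0 < 1 - 2 * l := by linarith
  refine ⟨c, 4 * Real.exp (4 * c) / (1 - 2 * l), hc, by positivity, fun N hN t ht => ?_⟩
  set s := 2 * Real.sqrt 2 * N
  set n := ⌈s⌉₊ + 3
  have hs2 : s ^ 2 = 8 * (N : ℝ) ^ 2 := by simp only [s, mul_pow, Real.sq_sqrt zero_le_two]; ring
  have hs : 2 ≤ s := by
    have : 1 ≤ Real.sqrt 2 := Real.one_le_sqrt.2 one_le_two
    have : (1 : ℝ) ≤ N := by exact_mod_cast hN
    nlinarith
  have hn_lb : s + 3 ≤ n := by simp only [n]; push_cast; linarith [Nat.le_ceil s]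
  have hn_ub : (n : ℝ) ≤ s + 4 := by
    simp only [n]; push_cast; linarith [Nat.ceil_lt_add_one (by linarith : 0 ≤ s)]
  have hn : 8 * N ^ 2 + 4 * n ≤ n ^ 2 := by
    exact_mod_cast (show (8 * N ^ 2 + 4 * n : ℝ) ≤ n ^ 2 by nlinarith)
  have hnum := tsum_pWeight_le_of_length_ge h1.le h2 (m := ⌈t * N⌉₊)
    (fun p : DRPath => (N : ℤ) ^ 2 ≤ pArea p ∧ t * N ≤ p.1) fun p hp => Nat.ceil_le.2 hp.2
  have hden := le_tsum_pWeight_area_ge h1.le h2 hn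
  calc _ ≤ (2 * l) ^ ⌈t * N⌉₊ / ((1 - 2 * l) / 4 * (2 * l) ^ n) :=
        div_le_div₀ (by positivity) hnum (by positivity) hden
    _ ≤ Real.exp (-(c * (t * N))) / ((1 - 2 * l) / 4 * Real.exp (-(c * (s + 4)))) := by
        rw [hpow, hpow]; gcongr; exact Nat.le_ceil _
    _ = _ := by
        field_simp
        rw [← Real.exp_add, ← Real.exp_add]
        congr 1
        ring
end

section
/- Entropy–energy competition: Fix 0 < λ < 1/2 and define, for ε, η > 0 with η < 1 − 2ε, c_{ε,η} = (1 − 2ε)·I(η/(1 − 2ε)) − (2ε + 2η)·I(η/(2ε + 2η)) + η·log λ, where I(x) = −x log x − (1−x) log(1−x) is the binary entropy function. Then there exist ε > 0 and η = η(ε) > 0 such that c_{ε,η} > 0. -/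
noncomputable def binEnt (x : ℝ) : ℝ := -x * Real.log x - (1 - x) * Real.log (1 - x)

lemma binEnt_quarter_le : binEnt (1/4) ≤ Real.log 2 := by
  have l4 : Real.log 4 = 2 * Real.log 2 := by
    rw [show (4:ℝ) = 2^2 by norm_num, Real.log_pow]; push_cast; ring
  have l16 : Real.log 16 = 4 * Real.log 2 := by
    rw [show (16:ℝ) = 2^4 by norm_num, Real.log_pow]; push_cast; ring
  have l27 : Real.log 27 = 3 * Real.log 3 := by
    rw [show (27:ℝ) = 3^3 by norm_num, Real.log_pow]; push_cast; ring
  have hle : Real.log 16 ≤ Real.log 27 := Real.log_le_log (by norm_num) (by norm_num)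
  have h14 : Real.log (1/4 : ℝ) = -Real.log 4 := by
    rw [show (1/4:ℝ) = 4⁻¹ by norm_num, Real.log_inv]
  have h34 : Real.log (3/4 : ℝ) = Real.log 3 - Real.log 4 := by
    rw [Real.log_div (by norm_num) (by norm_num)]
  unfold binEnt
  rw [show (1 - 1/4 : ℝ) = 3/4 by norm_num, h14, h34]
  nlinarith [hle]

/-- Entropy–energy competition: for `0 < λ < 1/2` there exist `ε > 0` and `η = η(ε) > 0`
with `c_{ε,η} = (1−2ε) I(η/(1−2ε)) − (2ε+2η) I(η/(2ε+2η)) + η log λ > 0`. -/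
theorem stmt10 (l : ℝ) (h1 : 0 < l) (h2 : l < 1 / 2) :
    ∃ ε η : ℝ, 0 < ε ∧ 0 < η ∧ η < 1 - 2 * ε ∧
      0 < (1 - 2 * ε) * binEnt (η / (1 - 2 * ε))
            - (2 * ε + 2 * η) * binEnt (η / (2 * ε + 2 * η)) + η * Real.log l := by
  set η : ℝ := l / 64 with hηdef
  have hη0 : 0 < η := by positivity
  have hηsmall : η < 1/128 := by rw [hηdef]; linarith
  refine ⟨η, η, hη0, hη0, by linarith, ?_⟩
  set d : ℝ := 1 - 2 * η with hddef
  have hd0 : 1/2 < d := by rw [hddef]; linarith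
  have hd1 : d < 1 := by rw [hddef]; linarith
  set x : ℝ := η / d with hxdef
  have hx0 : 0 < x := by positivity
  have hx1 : x < 1 := by
    rw [hxdef, div_lt_one (by linarith)]; linarith
  -- first term lower bound
  have hdx : d * x = η := by
    rw [hxdef]; field_simp
  have hlogx : Real.log x = Real.log η - Real.log d := by
    rw [hxdef, Real.log_div (ne_of_gt hη0) (by linarith)]
  have hlogd : -Real.log 2 ≤ Real.log d := by
    have := Real.log_le_log (by norm_num : (0:ℝ) < 1/2) (le_of_lt hd0)
    rw [show (1/2:ℝ) = 2⁻¹ by norm_num, Real.log_inv] at this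
    linarith
  have hlog1x : Real.log (1 - x) ≤ 0 := Real.log_nonpos (by linarith) (by linarith)
  have hfirst : -η * Real.log η - η * Real.log 2 ≤ d * binEnt x := by
    unfold binEnt
    have h1x : 0 < 1 - x := by linarith
    have h3 : 0 ≤ d * (-(1 - x) * Real.log (1 - x)) := by
      apply mul_nonneg (by linarith)
      have : 0 ≤ -Real.log (1-x) := by linarith
      nlinarith
    have key1 : d * (-x * Real.log x) = -η * Real.log η + η * Real.log d := by
      have e1 : d * (-x * Real.log x) = -(d * x) * Real.log x := by ring
      rw [e1, hdx, hlogx]; ring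
    have key2 : -(η * Real.log 2) ≤ η * Real.log d := by nlinarith
    have expand : d * (-x * Real.log x - (1 - x) * Real.log (1 - x))
        = d * (-x * Real.log x) + d * (-(1 - x) * Real.log (1 - x)) := by ring
    linarith [expand, key1, key2, h3]
  -- second term
  have hsecond : η / (2 * η + 2 * η) = 1/4 := by
    field_simp; ring
  have hlogη : Real.log η = Real.log l - 6 * Real.log 2 := by
    rw [hηdef, Real.log_div (ne_of_gt h1) (by norm_num),
        show (64:ℝ) = 2^6 by norm_num, Real.log_pow]
    push_cast; ring
  have hq := binEnt_quarter_le
  have hlog2 : 0 < Real.log 2 := Real.log_pos (by norm_num)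
  rw [hsecond]
  clear_value x d η
  have : (2 * η + 2 * η) * binEnt (1/4) ≤ 4 * η * Real.log 2 := by
    nlinarith
  calc (0:ℝ) < η * Real.log 2 := by positivity
    _ ≤ (-η * Real.log η - η * Real.log 2) - 4 * η * Real.log 2 + η * Real.log l := by
        rw [hlogη]; ring_nf; nlinarith
    _ ≤ d * binEnt x - (2 * η + 2 * η) * binEnt (1/4) + η * Real.log l := by
        nlinarith [hfirst, this]
end

section
/- Surgery increases length by exactly |ℋ| and increases area: Let γ be an oriented down-right path in the first quadrant and ℋ a subset of its horizontal steps. Let Surg(γ, ℋ) be the path obtained from γ by inserting one vertical (downward) step immediately before each step of ℋ (and shifting the earlier part of the path up accordingly so the result is still a valid down-right path from the y-axis to the x-axis). Then |Surg(γ, ℋ)| = |γ| + |ℋ|, and A(Surg(γ, ℋ)) ≥ A(γ). -/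
/-- A down-right path coded as its list of steps (`true` = rightward, `false` = downward);
its enclosed area is the sum, over horizontal steps, of the current height (= number of
downward steps remaining). -/
def larea : List Bool → ℕ
  | [] => 0
  | b :: t => (if b then t.count false else 0) + larea t

/-- `surg s m` inserts a downward step just before each step of `s` marked by `m`. -/
def surg : List Bool → List Bool → List Bool
  | [], _ => []
  | s, [] => s
  | b :: t, i :: mk => if i then false :: b :: surg t mk else b :: surg t mk

lemma surg_nil (s : List Bool) : surg s [] = s := by
  cases s <;> rfl

lemma surg_aux (s m : List Bool) (hlen : m.length = s.length)
    (hH : ∀ j : ℕ, m.getD j false = true → s.getD j false = true) :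
    (surg s m).length = s.length + m.count true ∧
    (surg s m).count false = s.count false + m.count true ∧
    larea s ≤ larea (surg s m) := by
  induction s generalizing m with
  | nil =>
    have : m = [] := List.length_eq_zero_iff.mp hlen
    subst this
    simp [surg, larea]
  | cons b t ih =>
    cases m with
    | nil => simp [surg_nil, larea]
    | cons i mk =>
      have hlen' : mk.length = t.length := by simpa using hlen
      have hH' : ∀ j : ℕ, mk.getD j false = true → t.getD j false = true := by
        intro j hj
        exact hH (j + 1) hj
      obtain ⟨h1, h2, h3⟩ := ih mk hlen' hH'
      cases i with
      | false =>
        have hs : surg (b :: t) (false :: mk) = b :: surg t mk := by simp [surg]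
        refine ⟨?_, ?_, ?_⟩
        · simp [hs, h1, List.count_cons]; omega
        · simp [hs, h2, List.count_cons]; cases b <;> simp <;> omega
        · simp only [hs, larea]
          cases b
          · simpa using h3
          · simp only [if_pos rfl, if_true]
            omega
      | true =>
        have hb : b = true := hH 0 (by simp)
        subst hb
        have hs : surg (true :: t) (true :: mk) = false :: true :: surg t mk := by
          simp [surg]
        refine ⟨?_, ?_, ?_⟩
        · simp [hs, h1, List.count_cons]; omega
        · simp [hs, h2, List.count_cons]; omega
        · simp only [hs, larea]
          simp only [reduceIte, if_true]
          omega

/-- Surgery increases the length by exactly `|ℋ|` and weakly increases the area, where the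
marker list `m` selects a subset `ℋ` of the horizontal steps of `s`. -/
theorem stmt11 (s m : List Bool) (hlen : m.length = s.length)
    (hH : ∀ j : ℕ, m.getD j false = true → s.getD j false = true) :
    (surg s m).length = s.length + m.count true ∧ larea s ≤ larea (surg s m) := by
  obtain ⟨h1, _, h3⟩ := surg_aux s m hlen hH
  exact ⟨h1, h3⟩
end
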